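/- Let A ⋊^σ G be a skew groupoid ring with G a groupoid with finitely many objects, all rings A_e equal to a fixed integral domain D, and each isotropy group G_e abelian. If A is not maximal commutative in A ⋊^σ G, then there exists a nonzero twosided ideal I of A ⋊^σ G with A ∩ I = {0}. Equivalently (contrapositive): if every nonzero twosided ideal of A ⋊^σ G intersects A nontrivially, then A is maximal commutative in A ⋊^σ G. -/

import Mathlib

/-!
If `x` commutes with `A` and has a nonzero coefficient at a morphism `s` that is not an
identity, comparing coefficients of `x (a u_e)` and `(a u_e) x` shows that `s` is a loop with
`σ_s = id` (cancellation in the domain `D`). Call two morphisms equivalent when they are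
parallel and act on `D` by the same automorphism. Left or right multiplication by `c u_f`
permutes the classes while twisting the class sums of coefficients by `c` and `σ_f`, so the
elements all of whose class sums vanish form a two-sided ideal `I`: the kernel of
`D ⋊^σ G → D ⋊^σ (G / ker σ)`. It contains `u_s - u_e ≠ 0`, and distinct identities lie in
distinct classes, so `I ∩ A = 0`.
-/

open CategoryTheory

/-- The type of morphisms of a category `G`, bundled with domain and codomain. -/
abbrev CMor (G : Type*) [Category G] := Σ e f : G, e ⟶ f

/-- Transport along an equality of objects, as a ring homomorphism. -/
def castRH {G : Type*} (A : G → Type*) [∀ e, Ring (A e)]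
    {e f : G} (h : e = f) : A e →+* A f := by subst h; exact RingHom.id _

/-- The carrier of the category crossed product `A ⋊_α^σ G`: finitely supported
formal sums `Σ_s a_s u_s` with `a_s ∈ A_{c(s)}`. -/
abbrev CP {G : Type*} [Category G] (A : G → Type*) [∀ e, Ring (A e)] :=
  Π₀ p : CMor G, A p.2.1

open Classical in
/-- The multiplication of the category crossed product:
`(a u_s)(b u_t) = a σ_s(b) α(s,t) u_{st}` when `d(s) = c(t)`, else `0`. -/
noncomputable def catMul {G : Type*} [Category G] {A : G → Type*} [∀ e, Ring (A e)]
    (σ : ∀ e f : G, (e ⟶ f) → (A e →+* A f))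
    (α : ∀ e f g : G, (f ⟶ g) → (e ⟶ f) → A g)
    (x y : CP A) : CP A :=
  x.sum fun p a => y.sum fun q b =>
    if h : q.2.1 = p.1 then
      DFinsupp.single (⟨q.1, p.2.1, (q.2.2 ≫ eqToHom h) ≫ p.2.2⟩ : CMor G)
        (a * σ p.1 p.2.1 p.2.2 (castRH A h b) * α q.1 p.1 p.2.1 p.2.2 (q.2.2 ≫ eqToHom h))
    else 0

open Classical in
/-- `a u_s`, the formal sum supported on a single morphism. -/
noncomputable def catSingle {G : Type*} [Category G] {A : G → Type*} [∀ e, Ring (A e)]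
    (p : CMor G) (a : A p.2.1) : CP A := DFinsupp.single p a

/-- `I` is a twosided ideal of the category crossed product `A ⋊_α^σ G`. -/
def IsCrossedIdeal {G : Type*} [Category G] {A : G → Type*} [∀ e, Ring (A e)]
    (σ : ∀ e f : G, (e ⟶ f) → (A e →+* A f))
    (α : ∀ e f g : G, (f ⟶ g) → (e ⟶ f) → A g)
    (I : Set (CP A)) : Prop :=
  (0 : CP A) ∈ I ∧ (∀ x y, x ∈ I → y ∈ I → x + y ∈ I) ∧ (∀ x, x ∈ I → -x ∈ I) ∧
    ∀ x r, x ∈ I → catMul σ α r x ∈ I ∧ catMul σ α x r ∈ I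

section CatMul
open Classical
variable {G : Type*} [Category G] {A : G → Type*} [∀ e, Ring (A e)]
  (σ : ∀ e f : G, (e ⟶ f) → (A e →+* A f)) (α : ∀ e f g : G, (f ⟶ g) → (e ⟶ f) → A g)

lemma CP.induction {motive : CP A → Prop} (x : CP A) (zero : motive 0)
    (add : ∀ x y, motive x → motive y → motive (x + y))
    (single : ∀ p a, motive (catSingle p a)) : motive x :=
  DFinsupp.induction x zero fun p a _ _ _ hy => add _ _ (single p a) hy

@[simp]
lemma catMul_zero_left (y : CP A) : catMul σ α 0 y = 0 :=
  DFinsupp.sum_zero_index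

@[simp]
lemma catMul_zero_right (x : CP A) : catMul σ α x 0 = 0 :=
  DFinsupp.sum_eq_zero fun _ => DFinsupp.sum_zero_index

lemma catMul_add_left (x y z : CP A) :
    catMul σ α (x + y) z = catMul σ α x z + catMul σ α y z := by
  refine DFinsupp.sum_add_index (fun p => DFinsupp.sum_eq_zero fun q => ?_) fun p a a' => ?_
  · split <;> simp
  · rw [← DFinsupp.sum_add]
    refine Finset.sum_congr rfl fun q _ => ?_
    dsimp only
    split <;> simp [add_mul, DFinsupp.single_add]

lemma catMul_add_right (x y z : CP A) :
    catMul σ α x (y + z) = catMul σ α x y + catMul σ α x z := by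
  rw [catMul, catMul, catMul, ← DFinsupp.sum_add]
  refine Finset.sum_congr rfl fun p _ => DFinsupp.sum_add_index (fun q => ?_) fun q b b' => ?_
  · split <;> simp
  · split <;> simp [mul_add, add_mul, DFinsupp.single_add]

lemma catSingle_catMul_catSingle {a b c : G} (s : b ⟶ c) (t : a ⟶ b) (x : A c) (y : A b) :
    catMul σ α (catSingle ⟨b, c, s⟩ x) (catSingle ⟨a, b, t⟩ y) =
      catSingle ⟨a, c, t ≫ s⟩ (x * σ b c s y * α a b c s t) := by
  rw [catMul, catSingle, catSingle, DFinsupp.sum_single_index, DFinsupp.sum_single_index]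
  · simp only [dite_true, castRH, eqToHom_refl]
    rw [Category.comp_id]
    rfl
  all_goals simp

lemma catSingle_catMul_catSingle_of_ne (p q : CMor G) (x : A p.2.1) (y : A q.2.1)
    (h : q.2.1 ≠ p.1) : catMul σ α (catSingle p x) (catSingle q y) = 0 := by
  rw [catMul, catSingle, catSingle, DFinsupp.sum_single_index, DFinsupp.sum_single_index,
    dif_neg h]
  all_goals simp

end CatMul

structure IsFunctorial {G : Type*} [Category G] {D : Type*} [Ring D]
    (σ : ∀ e f : G, (e ⟶ f) → (D →+* D)) : Prop where
  map_id : ∀ e : G, σ e e (𝟙 e) = RingHom.id D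
  map_comp : ∀ (e f g : G) (s : e ⟶ f) (t : f ⟶ g), σ e g (s ≫ t) = (σ f g t).comp (σ e f s)

section SkewGroupoidRing
open Classical
variable {G : Type*} [Groupoid G] {D : Type*} [Ring D] {σ : ∀ e f : G, (e ⟶ f) → (D →+* D)}

local notation:70 x:70 " ⋆ " y:71 => catMul (A := fun _ => D) σ (fun _ _ _ _ _ => 1) x y

namespace IsFunctorial

lemma inv_comp (hσ : IsFunctorial σ) {e f : G} (s : e ⟶ f) :
    (σ f e (Groupoid.inv s)).comp (σ e f s) = RingHom.id D := by
  rw [← hσ.map_comp, Groupoid.comp_inv, hσ.map_id]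

lemma comp_inv (hσ : IsFunctorial σ) {e f : G} (s : e ⟶ f) :
    (σ e f s).comp (σ f e (Groupoid.inv s)) = RingHom.id D := by
  rw [← hσ.map_comp, Groupoid.inv_comp, hσ.map_id]

end IsFunctorial

variable (σ) in
def SameAction (p q : CMor G) : Prop :=
  p.1 = q.1 ∧ p.2.1 = q.2.1 ∧ σ p.1 p.2.1 p.2.2 = σ q.1 q.2.1 q.2.2

lemma SameAction.refl (p : CMor G) : SameAction σ p p :=
  ⟨rfl, rfl, rfl⟩

lemma SameAction.symm {p q : CMor G} (h : SameAction σ p q) : SameAction σ q p :=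
  ⟨h.1.symm, h.2.1.symm, h.2.2.symm⟩

lemma SameAction.trans {p q r : CMor G} (h : SameAction σ p q) (h' : SameAction σ q r) :
    SameAction σ p r :=
  ⟨h.1.trans h'.1, h.2.1.trans h'.2.1, h.2.2.trans h'.2.2⟩

lemma sameAction_comp_right_iff (hσ : IsFunctorial σ) {a₀ a' a b : G} (g : a₀ ⟶ b)
    (t : a' ⟶ a) (f : a ⟶ b) :
    SameAction σ ⟨a₀, b, g⟩ ⟨a', b, t ≫ f⟩ ↔
      SameAction σ ⟨a₀, a, g ≫ Groupoid.inv f⟩ ⟨a', a, t⟩ := by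
  simp only [SameAction, true_and, hσ.map_comp]
  refine and_congr_right fun _ => ⟨fun h => ?_, fun h => ?_⟩
  · rw [h, ← RingHom.comp_assoc, hσ.inv_comp, RingHom.id_comp]
  · rw [← h, ← RingHom.comp_assoc, hσ.comp_inv, RingHom.id_comp]

lemma sameAction_comp_left_iff (hσ : IsFunctorial σ) {a b b₀ b' : G} (g : a ⟶ b₀)
    (f : a ⟶ b) (t : b ⟶ b') :
    SameAction σ ⟨a, b₀, g⟩ ⟨a, b', f ≫ t⟩ ↔
      SameAction σ ⟨b, b₀, Groupoid.inv f ≫ g⟩ ⟨b, b', t⟩ := by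
  simp only [SameAction, true_and, hσ.map_comp]
  refine and_congr_right fun _ => ⟨fun h => ?_, fun h => ?_⟩
  · rw [h, RingHom.comp_assoc, hσ.comp_inv, RingHom.comp_id]
  · rw [← h, RingHom.comp_assoc, hσ.inv_comp, RingHom.comp_id]

lemma catSingle_apply (p q : CMor G) (b : D) :
    (catSingle q b : CP (fun _ : G => D)) p = if q = p then b else 0 := by
  rcases eq_or_ne q p with rfl | hne
  · simp [catSingle]
  · simp [catSingle, hne]

variable (σ) in
noncomputable def classSum (p : CMor G) : CP (fun _ : G => D) →+ D :=
  DFinsupp.sumAddHom fun q => if SameAction σ p q then AddMonoidHom.id D else 0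

lemma classSum_catSingle (p q : CMor G) (b : D) :
    classSum σ p (catSingle q b) = if SameAction σ p q then b else 0 := by
  rw [classSum, catSingle, DFinsupp.sumAddHom_single]
  split <;> rfl

lemma classSum_eq_apply (p : CMor G) (y : CP (fun _ : G => D))
    (h : ∀ q, SameAction σ p q → q ≠ p → y q = 0) : classSum σ p y = y p := by
  rw [classSum, DFinsupp.sumAddHom_apply, DFinsupp.sum, Finset.sum_eq_single p]
  · rw [if_pos (SameAction.refl p)]
    rfl
  · intro q _ hq
    split_ifs with hpq
    · exact h q hpq hq
    · rfl
  · intro hp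
    rw [DFinsupp.notMem_support_iff.mp hp, map_zero]

lemma classSum_catSingle_catMul (hσ : IsFunctorial σ) {a₀ a b : G} (g : a₀ ⟶ b) (f : a ⟶ b)
    (c : D) (x : CP (fun _ : G => D)) :
    classSum σ ⟨a₀, b, g⟩ (catSingle ⟨a, b, f⟩ c ⋆ x) =
      c * σ a b f (classSum σ ⟨a₀, a, g ≫ Groupoid.inv f⟩ x) := by
  induction x using CP.induction with
  | zero => simp
  | add x y hx hy => rw [catMul_add_right, map_add, hx, hy, map_add, map_add, mul_add]
  | single q d =>
    obtain ⟨a', b', t⟩ := q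
    by_cases h : b' = a
    · subst h
      rw [catSingle_catMul_catSingle, classSum_catSingle, classSum_catSingle,
        sameAction_comp_right_iff hσ]
      split_ifs <;> simp
    · rw [catSingle_catMul_catSingle_of_ne (h := h), map_zero, classSum_catSingle,
        if_neg fun h' => h h'.2.1.symm, map_zero, mul_zero]

lemma classSum_catSingle_catMul_of_ne (p P : CMor G) (c : D) (x : CP (fun _ : G => D))
    (h : p.2.1 ≠ P.2.1) : classSum σ p (catSingle P c ⋆ x) = 0 := by
  induction x using CP.induction with
  | zero => simp
  | add x y hx hy => rw [catMul_add_right, map_add, hx, hy, add_zero]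
  | single q d =>
    obtain ⟨a, b, f⟩ := P
    obtain ⟨a', b', t⟩ := q
    by_cases h' : b' = a
    · subst h'
      rw [catSingle_catMul_catSingle, classSum_catSingle, if_neg fun h'' => h h''.2.1]
    · rw [catSingle_catMul_catSingle_of_ne (h := h'), map_zero]

lemma classSum_catMul_catSingle (hσ : IsFunctorial σ) {a b b₀ : G} (g : a ⟶ b₀) (f : a ⟶ b)
    (c : D) (x : CP (fun _ : G => D)) :
    classSum σ ⟨a, b₀, g⟩ (x ⋆ catSingle ⟨a, b, f⟩ c) =
      classSum σ ⟨b, b₀, Groupoid.inv f ≫ g⟩ x * σ b b₀ (Groupoid.inv f ≫ g) c := by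
  induction x using CP.induction with
  | zero => simp
  | add x y hx hy => rw [catMul_add_left, map_add, hx, hy, map_add, add_mul]
  | single q d =>
    obtain ⟨a', b', t⟩ := q
    by_cases h : a' = b
    · subst h
      rw [catSingle_catMul_catSingle, classSum_catSingle, classSum_catSingle,
        sameAction_comp_left_iff hσ]
      split_ifs with hst
      · rw [hst.2.2, mul_one]
      · rw [zero_mul]
    · rw [catSingle_catMul_catSingle_of_ne (h := Ne.symm h), map_zero, classSum_catSingle,
        if_neg fun h' => h h'.1.symm, zero_mul]

lemma classSum_catMul_catSingle_of_ne (p Q : CMor G) (c : D) (x : CP (fun _ : G => D))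
    (h : p.1 ≠ Q.1) : classSum σ p (x ⋆ catSingle Q c) = 0 := by
  induction x using CP.induction with
  | zero => simp
  | add x y hx hy => rw [catMul_add_left, map_add, hx, hy, add_zero]
  | single q d =>
    obtain ⟨a, b, f⟩ := Q
    obtain ⟨a', b', t⟩ := q
    by_cases h' : a' = b
    · subst h'
      rw [catSingle_catMul_catSingle, classSum_catSingle, if_neg fun h'' => h h''.1]
    · rw [catSingle_catMul_catSingle_of_ne (h := Ne.symm h'), map_zero]

variable (σ) in
noncomputable def classSumKernel : AddSubgroup (CP (fun _ : G => D)) :=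
  ⨅ p, (classSum σ p).ker

lemma mem_classSumKernel {y : CP (fun _ : G => D)} :
    y ∈ classSumKernel σ ↔ ∀ p, classSum σ p y = 0 := by
  simp only [classSumKernel, AddSubgroup.mem_iInf, AddMonoidHom.mem_ker]

lemma catSingle_catMul_mem_classSumKernel (hσ : IsFunctorial σ) (P : CMor G) (c : D)
    {y : CP (fun _ : G => D)} (hy : y ∈ classSumKernel σ) :
    catSingle P c ⋆ y ∈ classSumKernel σ := by
  rw [mem_classSumKernel] at hy ⊢
  rintro ⟨a₀, b₀, g⟩
  obtain ⟨a, b, f⟩ := P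
  by_cases h : b₀ = b
  · subst h
    rw [classSum_catSingle_catMul hσ, hy, map_zero, mul_zero]
  · exact classSum_catSingle_catMul_of_ne _ _ c y h

lemma catMul_catSingle_mem_classSumKernel (hσ : IsFunctorial σ) (Q : CMor G) (c : D)
    {y : CP (fun _ : G => D)} (hy : y ∈ classSumKernel σ) :
    y ⋆ catSingle Q c ∈ classSumKernel σ := by
  rw [mem_classSumKernel] at hy ⊢
  rintro ⟨a₀, b₀, g⟩
  obtain ⟨a, b, f⟩ := Q
  by_cases h : a₀ = a
  · subst h
    rw [classSum_catMul_catSingle hσ, hy, zero_mul]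
  · exact classSum_catMul_catSingle_of_ne _ _ c y h

lemma isCrossedIdeal_classSumKernel (hσ : IsFunctorial σ) :
    IsCrossedIdeal (A := fun _ : G => D) σ (fun _ _ _ _ _ => 1) (classSumKernel σ) := by
  refine ⟨zero_mem _, fun _ _ => add_mem, fun _ => neg_mem, fun y r hy => ⟨?_, ?_⟩⟩
  · induction r using CP.induction with
    | zero => simp
    | add r r' hr hr' => rw [catMul_add_left]; exact add_mem hr hr'
    | single P c => exact catSingle_catMul_mem_classSumKernel hσ P c hy
  · induction r using CP.induction with
    | zero => simp
    | add r r' hr hr' => rw [catMul_add_right]; exact add_mem hr hr'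
    | single Q c => exact catMul_catSingle_mem_classSumKernel hσ Q c hy

lemma catSingle_sub_catSingle_mem_classSumKernel {p q : CMor G} (h : SameAction σ p q)
    (c : D) : catSingle p c - catSingle q c ∈ classSumKernel σ := by
  refine mem_classSumKernel.mpr fun r => ?_
  rw [map_sub, classSum_catSingle, classSum_catSingle,
    if_congr ⟨fun h' => h'.trans h, fun h' => h'.trans h.symm⟩ rfl rfl, sub_self]

lemma eq_zero_of_mem_classSumKernel {y : CP (fun _ : G => D)} (hy : y ∈ classSumKernel σ)
    (hA : ∀ p : CMor G, (∀ e : G, p ≠ ⟨e, e, 𝟙 e⟩) → y p = 0) : y = 0 := by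
  ext p
  by_cases hid : ∃ e : G, p = ⟨e, e, 𝟙 e⟩
  · obtain ⟨e, rfl⟩ := hid
    rw [← classSum_eq_apply _ _ fun q hq hne => hA q ?_, mem_classSumKernel.mp hy,
      DFinsupp.zero_apply]
    rintro e' rfl
    obtain rfl : e = e' := hq.1
    exact hne rfl
  · exact hA p fun e he => hid ⟨e, he⟩

lemma catMul_catSingle_id_apply (x : CP (fun _ : G => D)) {e f : G} (s : e ⟶ f) (a : D) :
    (x ⋆ catSingle ⟨e, e, 𝟙 e⟩ a) ⟨e, f, s⟩ = x ⟨e, f, s⟩ * σ e f s a := by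
  induction x using CP.induction with
  | zero => simp
  | add x y hx hy => rw [catMul_add_left, DFinsupp.add_apply, hx, hy, DFinsupp.add_apply, add_mul]
  | single q d =>
    obtain ⟨e', f', t⟩ := q
    by_cases h : e = e'
    · subst h
      rw [catSingle_catMul_catSingle, Category.id_comp, mul_one, catSingle_apply, catSingle_apply]
      split_ifs with hq
      · cases hq; rfl
      · rw [zero_mul]
    · rw [catSingle_catMul_catSingle_of_ne (h := h), catSingle_apply,
        if_neg fun hq => h (congrArg Sigma.fst hq).symm, DFinsupp.zero_apply, zero_mul]

lemma catSingle_id_catMul_apply (hσ : IsFunctorial σ) (x : CP (fun _ : G => D)) {e f : G}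
    (s : e ⟶ f) (a : D) :
    (catSingle ⟨f, f, 𝟙 f⟩ a ⋆ x) ⟨e, f, s⟩ = a * x ⟨e, f, s⟩ := by
  induction x using CP.induction with
  | zero => simp
  | add x y hx hy => rw [catMul_add_right, DFinsupp.add_apply, hx, hy, DFinsupp.add_apply, mul_add]
  | single q d =>
    obtain ⟨e', f', t⟩ := q
    by_cases h : f' = f
    · subst h
      rw [catSingle_catMul_catSingle, Category.comp_id, mul_one, hσ.map_id, catSingle_apply,
        catSingle_apply]
      split_ifs <;> simp
    · rw [catSingle_catMul_catSingle_of_ne (h := h), catSingle_apply,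
        if_neg fun hq => h (congrArg (·.2.1) hq), DFinsupp.zero_apply, mul_zero]

lemma catSingle_id_catMul_apply_of_ne (x : CP (fun _ : G => D)) {e f e' : G} (s : e ⟶ f) (a : D)
    (h : f ≠ e') : (catSingle ⟨e', e', 𝟙 e'⟩ a ⋆ x) ⟨e, f, s⟩ = 0 := by
  induction x using CP.induction with
  | zero => simp
  | add x y hx hy => rw [catMul_add_right, DFinsupp.add_apply, hx, hy, add_zero]
  | single q d =>
    obtain ⟨e'', f', t⟩ := q
    by_cases h' : f' = e'
    · subst h'
      rw [catSingle_catMul_catSingle, catSingle_apply,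
        if_neg fun hq => h (congrArg (·.2.1) hq).symm]
    · rw [catSingle_catMul_catSingle_of_ne (h := h'), DFinsupp.zero_apply]

lemma catSingle_sub_catSingle_ne_zero {p q : CMor G} (h : p ≠ q) {c : D} (hc : c ≠ 0) :
    (catSingle p c - catSingle q c : CP (fun _ : G => D)) ≠ 0 := by
  intro h0
  have hp := DFunLike.congr_fun h0 p
  rw [DFinsupp.sub_apply, catSingle_apply, catSingle_apply, if_pos rfl, if_neg h.symm,
    sub_zero, DFinsupp.zero_apply] at hp
  exact hc hp

variable (σ) in
def CommutesWithCoeffs (x : CP (fun _ : G => D)) : Prop :=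
  ∀ (e : G) (a : D), x ⋆ catSingle ⟨e, e, 𝟙 e⟩ a = catSingle ⟨e, e, 𝟙 e⟩ a ⋆ x

lemma eq_of_commutesWithCoeffs {x : CP (fun _ : G => D)} (hx : CommutesWithCoeffs σ x)
    {e f : G} (s : e ⟶ f) (hs : x ⟨e, f, s⟩ ≠ 0) : f = e := by
  by_contra h
  have hxs := DFunLike.congr_fun (hx e 1) ⟨e, f, s⟩
  rw [catMul_catSingle_id_apply, map_one, mul_one, catSingle_id_catMul_apply_of_ne _ _ _ h] at hxs
  exact hs hxs

end SkewGroupoidRing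

lemma sigma_eq_id_of_commutesWithCoeffs {G : Type*} [Groupoid G] {D : Type*} [CommRing D]
    [IsDomain D] {σ : ∀ e f : G, (e ⟶ f) → (D →+* D)} (hσ : IsFunctorial σ)
    {x : CP (fun _ : G => D)} (hx : CommutesWithCoeffs σ x) {e : G} (s : e ⟶ e)
    (hs : x ⟨e, e, s⟩ ≠ 0) : σ e e s = RingHom.id D := by
  ext a
  have hxs := DFunLike.congr_fun (hx e a) ⟨e, e, s⟩
  rw [catMul_catSingle_id_apply, catSingle_id_catMul_apply hσ, mul_comm a] at hxs
  exact mul_left_cancel₀ hs hxs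

theorem skew_groupoid_ring_not_maximal_commutative_general
    {G : Type*} [Groupoid G] {D : Type*} [CommRing D] [IsDomain D]
    (σ : ∀ e f : G, (e ⟶ f) → (D →+* D))
    (hσ1 : ∀ e : G, σ e e (𝟙 e) = RingHom.id D)
    (hσcomp : ∀ (e f g : G) (s : e ⟶ f) (t : f ⟶ g),
      σ e g (s ≫ t) = (σ f g t).comp (σ e f s))
    (hnotmax : ¬ ∀ x : CP (fun _ : G => D),
      (∀ (e : G) (a : D),
        catMul (A := fun _ : G => D) σ (fun _ _ _ _ _ => 1) x
            (catSingle (A := fun _ : G => D) ⟨e, e, 𝟙 e⟩ a)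
          = catMul (A := fun _ : G => D) σ (fun _ _ _ _ _ => 1)
            (catSingle (A := fun _ : G => D) ⟨e, e, 𝟙 e⟩ a) x) →
      ∀ p : CMor G, (∀ e : G, p ≠ ⟨e, e, 𝟙 e⟩) → x p = 0) :
    ∃ I : Set (CP (fun _ : G => D)),
      IsCrossedIdeal (A := fun _ : G => D) σ (fun _ _ _ _ _ => 1) I ∧
      (∃ y ∈ I, y ≠ 0) ∧
      ∀ y ∈ I, (∀ p : CMor G, (∀ e : G, p ≠ ⟨e, e, 𝟙 e⟩) → y p = 0) → y = 0 := by
  have hσ : IsFunctorial σ := ⟨hσ1, hσcomp⟩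
  push Not at hnotmax
  obtain ⟨x, hx, ⟨e, f, s⟩, hs_ne_id, hxs⟩ := hnotmax
  obtain rfl := eq_of_commutesWithCoeffs hx s hxs
  have hsame : SameAction σ ⟨f, f, s⟩ ⟨f, f, 𝟙 f⟩ :=
    ⟨rfl, rfl, by rw [sigma_eq_id_of_commutesWithCoeffs hσ hx s hxs, hσ.map_id]⟩
  exact ⟨classSumKernel σ, isCrossedIdeal_classSumKernel hσ,
    ⟨_, catSingle_sub_catSingle_mem_classSumKernel hsame 1,
      catSingle_sub_catSingle_ne_zero (hs_ne_id f) one_ne_zero⟩,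
    fun y hy hA => eq_zero_of_mem_classSumKernel hy hA⟩

/-- let `A ⋊^σ G` be a skew groupoid ring over a groupoid with
finitely many objects, with all coefficient rings equal to a fixed integral
domain `D` and all isotropy groups abelian. If `A` is not maximal commutative
in `A ⋊^σ G`, then there is a nonzero twosided ideal of `A ⋊^σ G` meeting `A`
trivially. -/
theorem skew_groupoid_ring_not_maximal_commutative
    {G : Type*} [Groupoid G] [Finite G] {D : Type*} [CommRing D] [IsDomain D]
    (σ : ∀ e f : G, (e ⟶ f) → (D →+* D))
    (hσ1 : ∀ e : G, σ e e (𝟙 e) = RingHom.id D)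
    (hσcomp : ∀ (e f g : G) (s : e ⟶ f) (t : f ⟶ g),
      σ e g (s ≫ t) = (σ f g t).comp (σ e f s))
    (habel : ∀ (e : G) (s t : e ⟶ e), s ≫ t = t ≫ s)
    (hnotmax : ¬ ∀ x : CP (fun _ : G => D),
      (∀ (e : G) (a : D),
        catMul (A := fun _ : G => D) σ (fun _ _ _ _ _ => 1) x
            (catSingle (A := fun _ : G => D) ⟨e, e, 𝟙 e⟩ a)
          = catMul (A := fun _ : G => D) σ (fun _ _ _ _ _ => 1)
            (catSingle (A := fun _ : G => D) ⟨e, e, 𝟙 e⟩ a) x) →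
      ∀ p : CMor G, (∀ e : G, p ≠ ⟨e, e, 𝟙 e⟩) → x p = 0) :
    ∃ I : Set (CP (fun _ : G => D)),
      IsCrossedIdeal (A := fun _ : G => D) σ (fun _ _ _ _ _ => 1) I ∧
      (∃ y ∈ I, y ≠ 0) ∧
      ∀ y ∈ I, (∀ p : CMor G, (∀ e : G, p ≠ ⟨e, e, 𝟙 e⟩) → y p = 0) → y = 0 :=
  skew_groupoid_ring_not_maximal_commutative_general σ hσ1 hσcomp hnotmax
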